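/- Let a₁, a₂, a₃ ≥ 1 be integers and let x₁₂, x₁₃, x₂₃ ≥ 1 be integers satisfying a₃x₁₂ < x₁₃ + x₂₃, a₂x₁₃ < x₁₂ + x₂₃, and a₁x₂₃ < x₁₂ + x₁₃. Then a₁a₂a₃ − a₁ − a₂ − a₃ − 2 < 0. -/
import Mathlib

theorem stmt_5 (a₁ a₂ a₃ x₁₂ x₁₃ x₂₃ : ℤ)
    (ha₁ : 1 ≤ a₁) (ha₂ : 1 ≤ a₂) (ha₃ : 1 ≤ a₃)
    (hx₁₂ : 1 ≤ x₁₂) (hx₁₃ : 1 ≤ x₁₃) (hx₂₃ : 1 ≤ x₂₃)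
    (h1 : a₃ * x₁₂ < x₁₃ + x₂₃) (h2 : a₂ * x₁₃ < x₁₂ + x₂₃) (h3 : a₁ * x₂₃ < x₁₂ + x₁₃) :
    a₁ * a₂ * a₃ - a₁ - a₂ - a₃ - 2 < 0 := by
  nlinarith [mul_lt_mul_of_pos_right h1 (by linarith : (0:ℤ) < x₁₂),
    mul_lt_mul_of_pos_right h2 (by linarith : (0:ℤ) < x₁₃),
    mul_lt_mul_of_pos_right h3 (by linarith : (0:ℤ) < x₂₃),
    sq_nonneg (x₁₃ - x₂₃), sq_nonneg (x₁₂ - x₂₃), sq_nonneg (x₁₂ - x₁₃),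
    sq_nonneg (a₃*x₁₂ - x₁₃ - x₂₃), sq_nonneg (a₂*x₁₃ - x₁₂ - x₂₃), sq_nonneg (a₁*x₂₃ - x₁₂ - x₁₃),
    mul_pos (by linarith : (0:ℤ) < x₁₂) (by linarith : (0:ℤ) < x₁₃),
    mul_pos (by linarith : (0:ℤ) < x₁₂) (by linarith : (0:ℤ) < x₂₃),
    mul_pos (by linarith : (0:ℤ) < x₁₃) (by linarith : (0:ℤ) < x₂₃),
    mul_le_mul ha₁ ha₂ one_pos.le (by linarith), mul_le_mul ha₂ ha₃ one_pos.le (by linarith),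
    mul_le_mul ha₁ ha₃ one_pos.le (by linarith)]
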